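/- arXiv:0903.0239 — 2 statements merged into one kernel-verified Lean document; each statement's English description precedes it below -/
import Mathlib

section
/- For every d ≥ 2 and every α > 0 there exists a volume-preserving bi-Lipschitz mapping φ: ℝ^d → ℝ^d mapping α(K_- ∪ Σ_0) onto α(K_- ∪ Σ), where K is the open unit cube in ℝ^d, K_- = K ∩ {x_d < 0}, Σ = K ∩ {x_d = 0}, and Σ_0 = Σ ∩ {x_{d-1} < 0}. -/
/-!
Only the last two coordinates `(a, b) = (x_{d-1}, x_d)` move. In that plane, `halfSquareMap α` is
a continuous piecewise-affine bijection with four affine pieces of determinant `1` on four convex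
sectors; it maps `(-α, α)² ∩ ({b < 0} ∪ {b = 0, a < 0})` onto `(-α, α)² ∩ {b ≤ 0}`, stretching the
left half of the top edge onto the whole edge. Being a min/max of affine functions, it and its
inverse are Lipschitz, and the change of variables formula on the interiors of the pieces, whose
boundaries are null, shows that it preserves Lebesgue measure. Extending it by the identity in the
other `d - 2` coordinates gives `φ`.
-/

open MeasureTheory Set Pointwise Function

noncomputable section

section PiecewiseAffine

variable {E : Type*} [NormedAddCommGroup E] [NormedSpace ℝ E] [FiniteDimensional ℝ E]
  [MeasurableSpace E] [BorelSpace E] (μ : Measure E) [μ.IsAddHaarMeasure]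
  {ι : Type*} [Finite ι] {C : ι → Set E}

theorem addHaar_compl_iUnion_interior_eq_zero (hC : ∀ k, Convex ℝ (C k))
    (hcover : ⋃ k, C k = univ) : μ (⋃ k, interior (C k))ᶜ = 0 := by
  refine measure_mono_null (fun x hx => ?_)
    (measure_iUnion_null fun k => (hC k).addHaar_frontier μ)
  obtain ⟨k, hk⟩ := mem_iUnion.mp (hcover ▸ mem_univ x : x ∈ ⋃ k, C k)
  exact mem_iUnion.mpr ⟨k, subset_closure hk, fun h => hx (mem_iUnion.mpr ⟨k, h⟩)⟩

theorem measurePreserving_of_piecewise_affine (hC : ∀ k, Convex ℝ (C k))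
    (hcover : ⋃ k, C k = univ) {L : ι → E →L[ℝ] E} (hdet : ∀ k, |(L k).det| = 1) {c : ι → E}
    {f : E → E} (hf : Bijective f) (hmeas : Measurable f)
    (hfC : ∀ k, EqOn f (fun x => L k x + c k) (C k)) : MeasurePreserving f μ μ := by
  refine ⟨hmeas, ?_⟩
  set s := ⋃ k, interior (C k)
  have hs_open : IsOpen s := isOpen_iUnion fun k => isOpen_interior
  have hs : μ sᶜ = 0 := addHaar_compl_iUnion_interior_eq_zero μ hC hcover
  have hderiv : ∀ x ∈ s, ∃ f' : E →L[ℝ] E, HasFDerivAt f f' x ∧ |f'.det| = 1 := by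
    intro x hx
    obtain ⟨k, hk⟩ := mem_iUnion.mp hx
    exact ⟨L k, ((L k).hasFDerivAt.add_const (c k)).congr_of_eventuallyEq
      (Filter.mem_of_superset (isOpen_interior.mem_nhds hk) fun y hy => hfC k (interior_subset hy)),
      hdet k⟩
  choose! f' hf' hf'det using hderiv
  have hmap := map_withDensity_abs_det_fderiv_eq_addHaar μ hs_open.measurableSet.nullMeasurableSet
    (fun x hx => (hf' x hx).hasFDerivWithinAt) hf.injective.injOn
  have hdensity : (μ.restrict s).withDensity (fun x => ENNReal.ofReal |(f' x).det|) = μ := by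
    rw [withDensity_congr_ae (g := 1) ((ae_restrict_mem hs_open.measurableSet).mono
      fun x hx => by simp [hf'det x hx]), withDensity_one,
      Measure.restrict_eq_self_of_ae_mem (ae_iff.mpr hs)]
  -- On `sᶜ`, `f` agrees pointwise with one of finitely many affine maps, which keep null sets null.
  have himage : μ (f '' s)ᶜ = 0 := by
    rw [← image_compl_eq hf]
    refine measure_mono_null (fun y ⟨x, hx, hxy⟩ => ?_) (measure_iUnion_null fun k =>
      addHaar_image_eq_zero_of_differentiableOn_of_addHaar_eq_zero μ
        ((L k).differentiable.add_const (c k)).differentiableOn hs)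
    obtain ⟨k, hk⟩ := mem_iUnion.mp (hcover ▸ mem_univ x : x ∈ ⋃ k, C k)
    exact mem_iUnion.mpr ⟨k, x, hx, hxy ▸ (hfC k hk).symm⟩
  rwa [hdensity, Measure.restrict_eq_self_of_ae_mem (ae_iff.mpr himage)] at hmap

end PiecewiseAffine

section ExtendCoords

variable {κ ι : Type*} {v : κ → ι}

def extendCoords (v : κ → ι) (F : (κ → ℝ) → κ → ℝ) (x : ι → ℝ) : ι → ℝ :=
  extend v (F (x ∘ v)) x

theorem extendCoords_comp (hv : Injective v) (F : (κ → ℝ) → κ → ℝ) (x : ι → ℝ) :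
    extendCoords v F x ∘ v = F (x ∘ v) :=
  funext fun m => hv.extend_apply _ _ m

theorem extendCoords_apply (hv : Injective v) (F : (κ → ℝ) → κ → ℝ) (x : ι → ℝ) (m : κ) :
    extendCoords v F x (v m) = F (x ∘ v) m :=
  hv.extend_apply _ _ m

theorem extendCoords_apply' (F : (κ → ℝ) → κ → ℝ) (x : ι → ℝ) {i : ι} (hi : i ∉ range v) :
    extendCoords v F x i = x i :=
  extend_apply' _ _ _ fun ⟨m, hm⟩ => hi ⟨m, hm⟩

theorem leftInverse_extendCoords (hv : Injective v) {F G : (κ → ℝ) → κ → ℝ}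
    (h : LeftInverse G F) : LeftInverse (extendCoords v G) (extendCoords v F) := fun x => by
  ext i
  by_cases hi : i ∈ range v
  · obtain ⟨m, rfl⟩ := hi
    rw [extendCoords_apply hv, extendCoords_comp hv, h]
    rfl
  · rw [extendCoords_apply' _ _ hi, extendCoords_apply' _ _ hi]

theorem forall_iff_forall_apply_and_forall_notMem_range (P : ι → Prop) :
    (∀ i, P i) ↔ (∀ m, P (v m)) ∧ ∀ i ∉ range v, P i := by
  refine ⟨fun h => ⟨fun m => h _, fun i _ => h i⟩, fun ⟨h₁, h₂⟩ i => ?_⟩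
  by_cases hi : i ∈ range v
  · obtain ⟨m, rfl⟩ := hi
    exact h₁ m
  · exact h₂ i hi

theorem preimage_extendCoords (hv : Injective v) {F : (κ → ℝ) → κ → ℝ} {T : Set ℝ}
    {P Q : (κ → ℝ) → Prop}
    (hF : F ⁻¹' {z | (∀ m, z m ∈ T) ∧ Q z} = {z | (∀ m, z m ∈ T) ∧ P z}) :
    extendCoords v F ⁻¹' {x | (∀ i, x i ∈ T) ∧ Q (x ∘ v)} =
      {x : ι → ℝ | (∀ i, x i ∈ T) ∧ P (x ∘ v)} := by
  ext x
  have hx := Set.ext_iff.mp hF (x ∘ v)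
  simp only [mem_preimage, mem_ofPred_eq, comp_apply, extendCoords_comp hv] at hx ⊢
  rw [forall_iff_forall_apply_and_forall_notMem_range (v := v),
    forall_iff_forall_apply_and_forall_notMem_range (v := v) (fun i => x i ∈ T)]
  simp only [extendCoords_apply hv]
  constructor
  · rintro ⟨⟨hFT, hT'⟩, hQ⟩
    obtain ⟨hT, hP⟩ := hx.mp ⟨hFT, hQ⟩
    exact ⟨⟨hT, fun i hi => extendCoords_apply' F x hi ▸ hT' i hi⟩, hP⟩
  · rintro ⟨⟨hT, hT'⟩, hP⟩
    obtain ⟨hFT, hQ⟩ := hx.mpr ⟨hT, hP⟩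
    exact ⟨⟨hFT, fun i hi => (extendCoords_apply' F x hi).symm ▸ hT' i hi⟩, hQ⟩

variable [Fintype κ] [Fintype ι]

theorem lipschitzWith_extendCoords (hv : Injective v) {K : NNReal} (hK : 1 ≤ K)
    {F : (κ → ℝ) → κ → ℝ} (hF : LipschitzWith K F) : LipschitzWith K (extendCoords v F) := by
  refine LipschitzWith.of_dist_le_mul fun x y =>
    (dist_pi_le_iff (by positivity)).mpr fun i => ?_
  by_cases hi : i ∈ range v
  · obtain ⟨m, rfl⟩ := hi
    have hcomp : dist (x ∘ v) (y ∘ v) ≤ dist x y :=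
      (dist_pi_le_iff dist_nonneg).mpr fun m => dist_le_pi_dist x y (v m)
    rw [extendCoords_apply hv, extendCoords_apply hv]
    calc dist (F (x ∘ v) m) (F (y ∘ v) m) ≤ dist (F (x ∘ v)) (F (y ∘ v)) := dist_le_pi_dist _ _ m
      _ ≤ K * dist (x ∘ v) (y ∘ v) := hF.dist_le_mul _ _
      _ ≤ K * dist x y := by gcongr
  · rw [extendCoords_apply' _ _ hi, extendCoords_apply' _ _ hi]
    exact (dist_le_pi_dist x y i).trans (le_mul_of_one_le_left dist_nonneg hK)

open Classical in
theorem measurePreserving_extendCoords (hv : Injective v) {F : (κ → ℝ) → κ → ℝ}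
    (hF : MeasurePreserving F) : MeasurePreserving (extendCoords v F) := by
  let split := MeasurableEquiv.piEquivPiSubtypeProd (fun _ : ι => ℝ) (· ∈ range v)
  let reindex := MeasurableEquiv.piCongrLeft (fun _ : range v => ℝ) (Equiv.ofInjective v hv)
  have hreindex : MeasurePreserving reindex := volume_measurePreserving_piCongrLeft _ _
  -- `range v` has its own `Fintype` instance, which differs from the generic one on subtypes.
  have hsplit : MeasurePreserving split volume volume := by
    convert volume_preserving_piEquivPiSubtypeProd (fun _ : ι => ℝ) (· ∈ range v) using 3
    all_goals first | rfl | congr!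
  have hconj :
      MeasurePreserving (split.symm ∘ Prod.map (reindex ∘ F ∘ reindex.symm) id ∘ split) :=
    hsplit.symm.comp <|
      (((hreindex.comp hF).comp hreindex.symm).prod (MeasurePreserving.id _)).comp hsplit
  convert hconj using 1
  ext x i
  by_cases hi : i ∈ range v
  · obtain ⟨m, rfl⟩ := hi
    rw [extendCoords_apply hv]
    simp only [comp_apply, split, MeasurableEquiv.piEquivPiSubtypeProd_symm_apply,
      dif_pos (mem_range_self m)]
    exact (Equiv.piCongrLeft_apply_apply (fun _ => ℝ) (Equiv.ofInjective v hv) (F (x ∘ v)) m).symm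
  · rw [extendCoords_apply' _ _ hi]
    simp only [comp_apply, split, MeasurableEquiv.piEquivPiSubtypeProd_symm_apply, dif_neg hi]
    rfl

end ExtendCoords

theorem exists_biLipschitz_measurePreserving_euclidean {ι : Type*} [Fintype ι]
    {Φ Ψ : (ι → ℝ) → ι → ℝ} {K : NNReal} (hΨΦ : LeftInverse Ψ Φ) (hΦΨ : RightInverse Ψ Φ)
    (hΦ : LipschitzWith K Φ) (hΨ : LipschitzWith K Ψ) (hmp : MeasurePreserving Φ) :
    ∃ (φ : EuclideanSpace ℝ ι → EuclideanSpace ℝ ι) (K' : NNReal),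
      LipschitzWith K' φ ∧ AntilipschitzWith K' φ ∧ Surjective φ ∧ MeasurePreserving φ ∧
      ∀ x, (φ x).ofLp = Φ x.ofLp := by
  have hlip {f : (ι → ℝ) → ι → ℝ} (hf : LipschitzWith K f) :=
    (PiLp.lipschitzWith_toLp 2 fun _ : ι => ℝ).comp (hf.comp (PiLp.lipschitzWith_ofLp 2 _))
  exact ⟨_, _, hlip hΦ,
    (hlip hΨ).to_rightInverse fun x => congrArg (WithLp.toLp 2) (hΨΦ x.ofLp),
    fun y => ⟨WithLp.toLp 2 (Ψ y.ofLp), congrArg (WithLp.toLp 2) (hΦΨ y.ofLp)⟩,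
    (PiLp.volume_preserving_toLp ι).comp (hmp.comp (PiLp.volume_preserving_ofLp ι)),
    fun _ => rfl⟩

section Plane

def planeAffine (p q r : ℝ) (z : Fin 2 → ℝ) : ℝ := p * z 0 + q * z 1 + r

theorem lipschitzWith_planeAffine {p q : ℝ} (r : ℝ) {K : NNReal} (h : |p| + |q| ≤ K) :
    LipschitzWith K (planeAffine p q r) := by
  refine LipschitzWith.of_dist_le_mul fun z w => ?_
  have h₀ := dist_le_pi_dist z w 0
  have h₁ := dist_le_pi_dist z w 1
  rw [Real.dist_eq] at h₀ h₁ ⊢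
  calc |planeAffine p q r z - planeAffine p q r w| = |p * (z 0 - w 0) + q * (z 1 - w 1)| := by
        rw [planeAffine, planeAffine]; ring_nf
    _ ≤ |p| * |z 0 - w 0| + |q| * |z 1 - w 1| := by
        rw [← abs_mul, ← abs_mul]; exact abs_add_le _ _
    _ ≤ |p| * dist z w + |q| * dist z w := by gcongr
    _ ≤ K * dist z w := by rw [← add_mul]; gcongr

theorem LipschitzWith.min_same {α : Type*} [PseudoEMetricSpace α] {K : NNReal} {f g : α → ℝ}
    (hf : LipschitzWith K f) (hg : LipschitzWith K g) :
    LipschitzWith K fun x => min (f x) (g x) := by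
  simpa using hf.min hg

theorem LipschitzWith.max_same {α : Type*} [PseudoEMetricSpace α] {K : NNReal} {f g : α → ℝ}
    (hf : LipschitzWith K f) (hg : LipschitzWith K g) :
    LipschitzWith K fun x => max (f x) (g x) := by
  simpa using hf.max hg

theorem LipschitzWith.pi {α ι : Type*} [PseudoMetricSpace α] [Fintype ι] {K : NNReal}
    {f : α → ι → ℝ} (h : ∀ i, LipschitzWith K fun x => f x i) : LipschitzWith K f :=
  LipschitzWith.of_dist_le_mul fun x y =>
    (dist_pi_le_iff (by positivity)).mpr fun i => (h i).dist_le_mul x y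

open Matrix

def halfSquareMap (α : ℝ) (z : Fin 2 → ℝ) : Fin 2 → ℝ :=
  ![min (planeAffine 0 1 α z)
      (min (planeAffine (1 / 2) 2 (3 * α / 2) z) (max (planeAffine 2 2 α z) (planeAffine 1 0 0 z))),
    min (planeAffine 0 (1 / 2) 0 z)
      (min (planeAffine (-1) 0 0 z) (min (planeAffine 0 2 α z) (planeAffine (1 / 4) 1 (α / 4) z)))]

def halfSquareMapInv (α : ℝ) (z : Fin 2 → ℝ) : Fin 2 → ℝ :=
  ![min (planeAffine (1 / 2) (-2) (-α / 2) z)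
      (min (planeAffine 0 (-1) 0 z) (max (planeAffine 2 (-2) (-α) z) (planeAffine 1 0 0 z))),
    max (planeAffine 0 2 0 z)
      (max (planeAffine 1 0 (-α) z)
        (max (planeAffine 0 (1 / 2) (-α / 2) z) (planeAffine (-1 / 4) 1 (-α / 4) z)))]

def halfSquarePiece (α : ℝ) : Fin 4 → Set (Fin 2 → ℝ) :=
  ![{z | 0 ≤ z 0 + 2 * z 1 + α ∧ 2 * z 0 + z 1 ≤ 0},
    {z | 0 ≤ z 0 + 2 * z 1 + α ∧ 0 ≤ 2 * z 0 + z 1},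
    {z | z 0 + 2 * z 1 + α ≤ 0 ∧ 0 ≤ z 0 - 4 * z 1 - 3 * α},
    {z | z 0 + 2 * z 1 + α ≤ 0 ∧ z 0 - 4 * z 1 - 3 * α ≤ 0}]

def halfSquareLinear : Fin 4 → Matrix (Fin 2) (Fin 2) ℝ :=
  ![!![2, 2; 0, 1 / 2], !![0, 1; -1, 0], !![1 / 2, 2; 0, 2], !![1, 0; 1 / 4, 1]]

def halfSquareShift (α : ℝ) : Fin 4 → Fin 2 → ℝ :=
  ![![α, 0], ![α, 0], ![3 * α / 2, α], ![0, α / 4]]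

def halfSquareInvPiece (α : ℝ) : Fin 4 → Set (Fin 2 → ℝ) :=
  ![{z | 0 ≤ z 0 + 4 * z 1 + α ∧ z 0 - 2 * z 1 - α ≤ 0},
    {z | 0 ≤ z 0 - 2 * z 1 - α ∧ 0 ≤ 2 * z 0 - z 1 - α},
    {z | 0 ≤ z 0 - 2 * z 1 - α ∧ 2 * z 0 - z 1 - α ≤ 0},
    {z | z 0 + 4 * z 1 + α ≤ 0 ∧ z 0 - 2 * z 1 - α ≤ 0}]

def halfSquareInvLinear : Fin 4 → Matrix (Fin 2) (Fin 2) ℝ :=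
  ![!![1 / 2, -2; 0, 2], !![0, -1; 1, 0], !![2, -2; 0, 1 / 2], !![1, 0; -1 / 4, 1]]

def halfSquareInvShift (α : ℝ) : Fin 4 → Fin 2 → ℝ :=
  ![![-α / 2, 0], ![0, -α], ![-α, -α / 2], ![0, -α / 4]]

variable (α : ℝ)

theorem lipschitzWith_halfSquareMap : LipschitzWith 4 (halfSquareMap α) := by
  refine LipschitzWith.pi fun m => ?_
  fin_cases m <;>
    simp only [halfSquareMap, Fin.zero_eta, Fin.mk_one, cons_val_zero, cons_val_one,
      cons_val_fin_one] <;>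
    repeat' first
      | apply LipschitzWith.min_same
      | apply LipschitzWith.max_same
      | (apply lipschitzWith_planeAffine; norm_num)

theorem lipschitzWith_halfSquareMapInv : LipschitzWith 4 (halfSquareMapInv α) := by
  refine LipschitzWith.pi fun m => ?_
  fin_cases m <;>
    simp only [halfSquareMapInv, Fin.zero_eta, Fin.mk_one, cons_val_zero, cons_val_one,
      cons_val_fin_one] <;>
    repeat' first
      | apply LipschitzWith.min_same
      | apply LipschitzWith.max_same
      | (apply lipschitzWith_planeAffine; norm_num)

theorem iUnion_halfSquarePiece : ⋃ k, halfSquarePiece α k = univ := by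
  refine eq_univ_of_forall fun z => mem_iUnion.mpr ?_
  rcases le_total 0 (z 0 + 2 * z 1 + α) with h₁ | h₁
  · rcases le_total (2 * z 0 + z 1) 0 with h₂ | h₂
    exacts [⟨0, h₁, h₂⟩, ⟨1, h₁, h₂⟩]
  · rcases le_total 0 (z 0 - 4 * z 1 - 3 * α) with h₃ | h₃
    exacts [⟨2, h₁, h₃⟩, ⟨3, h₁, h₃⟩]

theorem iUnion_halfSquareInvPiece : ⋃ k, halfSquareInvPiece α k = univ := by
  refine eq_univ_of_forall fun z => mem_iUnion.mpr ?_
  rcases le_total 0 (z 0 - 2 * z 1 - α) with h₁ | h₁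
  · rcases le_total 0 (2 * z 0 - z 1 - α) with h₂ | h₂
    exacts [⟨1, h₁, h₂⟩, ⟨2, h₁, h₂⟩]
  · rcases le_total 0 (z 0 + 4 * z 1 + α) with h₃ | h₃
    exacts [⟨0, h₃, h₁⟩, ⟨3, h₃, h₁⟩]

theorem convex_halfSquarePiece (k : Fin 4) : Convex ℝ (halfSquarePiece α k) := by
  intro x hx y hy a b ha hb hab
  obtain rfl : b = 1 - a := by linarith
  fin_cases k <;>
  · simp [halfSquarePiece] at hx hy ⊢
    constructor <;> nlinarith

theorem halfSquareMap_eqOn (k : Fin 4) :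
    EqOn (halfSquareMap α) (fun z => halfSquareLinear k *ᵥ z + halfSquareShift α k)
      (halfSquarePiece α k) := by
  intro z hz
  ext m
  fin_cases k <;> fin_cases m <;>
  · simp [halfSquarePiece, halfSquareLinear, halfSquareShift, dotProduct, Fin.sum_univ_two] at hz ⊢
    simp only [halfSquareMap, planeAffine, cons_val_zero, cons_val_one, cons_val_fin_one,
      Fin.isValue, min_def, max_def]
    split_ifs <;> linarith

theorem halfSquareMapInv_eqOn (k : Fin 4) :
    EqOn (halfSquareMapInv α) (fun z => halfSquareInvLinear k *ᵥ z + halfSquareInvShift α k)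
      (halfSquareInvPiece α k) := by
  intro z hz
  ext m
  fin_cases k <;> fin_cases m <;>
  · simp [halfSquareInvPiece, halfSquareInvLinear, halfSquareInvShift, dotProduct,
      Fin.sum_univ_two] at hz ⊢
    simp only [halfSquareMapInv, planeAffine, cons_val_zero, cons_val_one, cons_val_fin_one,
      Fin.isValue, min_def, max_def]
    split_ifs <;> linarith

theorem halfSquareMapInv_halfSquareMap :
    LeftInverse (halfSquareMapInv α) (halfSquareMap α) := by
  intro z
  obtain ⟨k, hk⟩ := mem_iUnion.mp (iUnion_halfSquarePiece α ▸ mem_univ z)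
  have h₀ := congrFun (halfSquareMap_eqOn α k hk) 0
  have h₁ := congrFun (halfSquareMap_eqOn α k hk) 1
  generalize halfSquareMap α z = w at h₀ h₁
  ext m
  fin_cases k <;> fin_cases m <;>
  · simp [halfSquarePiece, halfSquareLinear, halfSquareShift, dotProduct, Fin.sum_univ_two]
      at hk h₀ h₁
    simp only [halfSquareMapInv, planeAffine, cons_val_zero, cons_val_one, cons_val_fin_one,
      Fin.zero_eta, Fin.mk_one, Fin.isValue, min_def, max_def]
    split_ifs <;> linarith

theorem halfSquareMap_halfSquareMapInv :
    RightInverse (halfSquareMapInv α) (halfSquareMap α) := by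
  intro z
  obtain ⟨k, hk⟩ := mem_iUnion.mp (iUnion_halfSquareInvPiece α ▸ mem_univ z)
  have h₀ := congrFun (halfSquareMapInv_eqOn α k hk) 0
  have h₁ := congrFun (halfSquareMapInv_eqOn α k hk) 1
  generalize halfSquareMapInv α z = w at h₀ h₁
  ext m
  fin_cases k <;> fin_cases m <;>
  · simp [halfSquareInvPiece, halfSquareInvLinear, halfSquareInvShift, dotProduct,
      Fin.sum_univ_two] at hk h₀ h₁
    simp only [halfSquareMap, planeAffine, cons_val_zero, cons_val_one, cons_val_fin_one,
      Fin.zero_eta, Fin.mk_one, Fin.isValue, min_def, max_def]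
    split_ifs <;> linarith

theorem preimage_halfSquareMap :
    halfSquareMap α ⁻¹' {z | (∀ m, z m ∈ Ioo (-α) α) ∧ z 1 ≤ 0} =
      {z : Fin 2 → ℝ | (∀ m, z m ∈ Ioo (-α) α) ∧ (z 1 < 0 ∨ z 1 = 0 ∧ z 0 < 0)} := by
  ext z
  obtain ⟨k, hk⟩ := mem_iUnion.mp (iUnion_halfSquarePiece α ▸ mem_univ z)
  have h₀ := congrFun (halfSquareMap_eqOn α k hk) 0
  have h₁ := congrFun (halfSquareMap_eqOn α k hk) 1
  simp only [mem_preimage, mem_ofPred_eq, Fin.forall_fin_two, mem_Ioo]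
  generalize halfSquareMap α z = w at h₀ h₁ ⊢
  fin_cases k <;>
  · simp [halfSquarePiece, halfSquareLinear, halfSquareShift, dotProduct, Fin.sum_univ_two]
      at hk h₀ h₁
    rw [h₀, h₁]
    grind

theorem measurePreserving_halfSquareMap : MeasurePreserving (halfSquareMap α) :=
  measurePreserving_of_piecewise_affine volume (convex_halfSquarePiece α) (iUnion_halfSquarePiece α)
    (L := fun k => LinearMap.toContinuousLinearMap (toLin' (halfSquareLinear k)))
    (fun k => by
      rw [ContinuousLinearMap.det, LinearMap.coe_toContinuousLinearMap, LinearMap.det_toLin']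
      fin_cases k <;> norm_num [halfSquareLinear, det_fin_two_of])
    ⟨(halfSquareMapInv_halfSquareMap α).injective, (halfSquareMap_halfSquareMapInv α).surjective⟩
    (lipschitzWith_halfSquareMap α).continuous.measurable (halfSquareMap_eqOn α)

end Plane

/-- For every `d ≥ 2` and every `α > 0` there exists a volume-preserving
bi-Lipschitz mapping `φ : ℝ^d → ℝ^d` mapping `α(K_- ∪ Σ₀)` onto `α(K_- ∪ Σ)`, where `K` is
the open unit cube of `ℝ^d`, `K_-` its lower half `K ∩ {x_d < 0}`, `Σ = K ∩ {x_d = 0}` the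
upper plate of `K_-` and `Σ₀ = Σ ∩ {x_{d-1} < 0}` its left half. -/
theorem exists_volumePreserving_biLipschitz_mapping_halfCube
    (d : ℕ) (hd : 2 ≤ d) (α : ℝ) (hα : 0 < α) :
    ∃ (φ : EuclideanSpace ℝ (Fin d) → EuclideanSpace ℝ (Fin d)) (K : NNReal),
      LipschitzWith K φ ∧ AntilipschitzWith K φ ∧ Function.Surjective φ ∧
      MeasurePreserving φ volume volume ∧
      φ '' (α • (({x : EuclideanSpace ℝ (Fin d) | ∀ i, |x i| < 1} ∩
            {x | x ⟨d - 1, by omega⟩ < 0}) ∪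
          (({x | ∀ i, |x i| < 1} ∩ {x | x ⟨d - 1, by omega⟩ = 0}) ∩
            {x | x ⟨d - 2, by omega⟩ < 0}))) =
        α • (({x : EuclideanSpace ℝ (Fin d) | ∀ i, |x i| < 1} ∩
            {x | x ⟨d - 1, by omega⟩ < 0}) ∪
          ({x | ∀ i, |x i| < 1} ∩ {x | x ⟨d - 1, by omega⟩ = 0})) := by
  set v : Fin 2 → Fin d := ![⟨d - 2, by omega⟩, ⟨d - 1, by omega⟩]
  have hv : Injective v := by
    intro i j h
    fin_cases i <;> fin_cases j <;> simp_all [v, Fin.ext_iff] <;> omega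
  obtain ⟨φ, K, hlip, hanti, hsurj, hmp, hφ⟩ := exists_biLipschitz_measurePreserving_euclidean
    (leftInverse_extendCoords hv (halfSquareMapInv_halfSquareMap α))
    (leftInverse_extendCoords hv (halfSquareMap_halfSquareMapInv α))
    (lipschitzWith_extendCoords hv (by norm_num) (lipschitzWith_halfSquareMap α))
    (lipschitzWith_extendCoords hv (by norm_num) (lipschitzWith_halfSquareMapInv α))
    (measurePreserving_extendCoords hv (measurePreserving_halfSquareMap α))
  refine ⟨φ, K, hlip, hanti, hsurj, hmp, (congrArg (φ '' ·) ?_).trans (image_preimage_eq _ hsurj)⟩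
  ext x
  have key := Set.ext_iff.mp (preimage_extendCoords hv (preimage_halfSquareMap α)) x.ofLp
  simp only [mem_preimage, mem_ofPred_eq, comp_apply, v] at key
  simpa [mem_smul_set_iff_inv_smul_mem₀ hα.ne', hα.ne', inv_mul_lt_iff₀ hα, lt_inv_mul_iff₀ hα,
    abs_lt, hφ, and_assoc, ← and_or_left, ← le_iff_lt_or_eq] using key.symm
end
end

section
/- Let Ω be a bounded Lipschitz domain, Γ ⊆ ∂Ω open, Υ ⊆ ℝ^d open with Ω_• := Ω ∩ Υ a Lipschitz domain, Γ_• := Γ ∩ Υ, and η ∈ C_0^∞(ℝ^d) with supp η ⊆ Υ. Then for every q ∈ (1,∞): (i) v ↦ (ηv)|_{Ω_•} is continuous from H^{1,q}_Γ(Ω) to H^{1,q}_{Γ_•}(Ω_•); (ii) v ↦ (the extension of ηv to Ω by zero) is continuous from H^{1,q}_{Γ_•}(Ω_•) to H^{1,q}_Γ(Ω). -/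
open MeasureTheory Set ENNReal Pointwise
open scoped RealInnerProductSpace NNReal

noncomputable section

abbrev Euc (d : ℕ) := EuclideanSpace ℝ (Fin d)

variable {d : ℕ}

/-- `g` is the weak gradient of `u` on the open set `Ω`. -/
def HasWeakGradOn (Ω : Set (Euc d)) (u : Euc d → ℝ) (g : Euc d → Euc d) : Prop :=
  ∀ φ : Euc d → ℝ, ContDiff ℝ (⊤ : ℕ∞) φ → HasCompactSupport φ → tsupport φ ⊆ Ω →
    ∫ x in Ω, u x • gradient φ x = -∫ x in Ω, φ x • g x

/-- The `H^{1,q}(Ω)` norm of a function `u` with (weak) gradient `g`. -/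
def sobNorm (q : ℝ) (Ω : Set (Euc d)) (u : Euc d → ℝ) (g : Euc d → Euc d) : ℝ :=
  (eLpNorm u (ENNReal.ofReal q) (volume.restrict Ω)).toReal +
    (eLpNorm g (ENNReal.ofReal q) (volume.restrict Ω)).toReal

/-- Membership in `H^{1,q}(Ω)` (with weak gradient `g`). -/
def MemSob (q : ℝ) (Ω : Set (Euc d)) (u : Euc d → ℝ) (g : Euc d → Euc d) : Prop :=
  MemLp u (ENNReal.ofReal q) (volume.restrict Ω) ∧
  MemLp g (ENNReal.ofReal q) (volume.restrict Ω) ∧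
  HasWeakGradOn Ω u g

/-- Membership in `H^{1,q}_Γ(Ω)`: member of `H^{1,q}(Ω)` that can be approximated in the
`H^{1,q}`-norm by smooth functions whose support avoids `∂Ω ∖ Γ`. -/
def MemSobGamma (q : ℝ) (Ω Γ : Set (Euc d)) (u : Euc d → ℝ) (g : Euc d → Euc d) : Prop :=
  MemSob q Ω u g ∧
  ∀ ε > (0 : ℝ), ∃ ψ : Euc d → ℝ, ContDiff ℝ (⊤ : ℕ∞) ψ ∧
    tsupport ψ ∩ (frontier Ω \ Γ) = ∅ ∧
    sobNorm q Ω (u - ψ) (g - fun x => gradient ψ x) < ε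

/-- A bounded measurable symmetric uniformly elliptic coefficient function on `Ω`. -/
structure IsEllipticOn (Ω : Set (Euc d)) (μ : Euc d → Euc d →L[ℝ] Euc d) : Prop where
  meas : AEStronglyMeasurable μ (volume.restrict Ω)
  bdd : ∃ M : ℝ, ∀ x ∈ Ω, ‖μ x‖ ≤ M
  symm : ∀ x ∈ Ω, ∀ v w : Euc d, ⟪μ x v, w⟫ = ⟪v, μ x w⟫
  ell : ∃ c > (0 : ℝ), ∀ x ∈ Ω, ∀ v : Euc d, c * ‖v‖ ^ 2 ≤ ⟪μ x v, v⟫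

/-- `Ω` is a bounded Lipschitz domain: around every boundary point there is a bi-Lipschitz
chart mapping `Ω` to the lower half `K_-` of the open unit cube and `∂Ω` to its plate. -/
def IsLipschitzDomain [NeZero d] (Ω : Set (Euc d)) : Prop :=
  IsOpen Ω ∧ Bornology.IsBounded Ω ∧
  ∀ x ∈ frontier Ω, ∃ (U : Set (Euc d)) (φ : Euc d → Euc d) (K : ℝ≥0) (α : ℝ),
    0 < α ∧ IsOpen U ∧ x ∈ U ∧ LipschitzOnWith K φ U ∧
    AntilipschitzWith K (U.restrict φ) ∧ φ x = 0 ∧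
    φ '' (U ∩ Ω) =
      α • ({y : Euc d | ∀ i, |y i| < 1} ∩ {y | y ⟨d - 1, Nat.sub_lt (NeZero.pos d) one_pos⟩ < 0}) ∧
    φ '' (U ∩ frontier Ω) =
      α • ({y : Euc d | ∀ i, |y i| < 1} ∩ {y | y ⟨d - 1, Nat.sub_lt (NeZero.pos d) one_pos⟩ = 0})

section Helpers

lemma gradient_mul' (a b : Euc d → ℝ) (ha : Differentiable ℝ a) (hb : Differentiable ℝ b)
    (x : Euc d) :
    gradient (fun y => a y * b y) x = a x • gradient b x + b x • gradient a x := by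
  unfold gradient
  rw [fderiv_fun_mul (ha x) (hb x), map_add, _root_.map_smul, _root_.map_smul]

lemma gradient_eq_zero_of_nmem_tsupport {f : Euc d → ℝ} {x : Euc d} (hx : x ∉ tsupport f) :
    gradient f x = 0 := by
  unfold gradient
  have : fderiv ℝ f x = 0 := by
    by_contra h
    exact hx (support_fderiv_subset ℝ (f := f) h)
  rw [this, map_zero]

lemma continuous_gradient {f : Euc d → ℝ} (hf : ContDiff ℝ (⊤ : ℕ∞) f) :
    Continuous fun x => gradient f x :=
  (InnerProductSpace.toDual ℝ (Euc d)).symm.continuous.comp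
    (hf.continuous_fderiv (by norm_num))

lemma hcs_gradient {f : Euc d → ℝ} (hf : HasCompactSupport f) :
    HasCompactSupport fun x => gradient f x :=
  (hf.fderiv ℝ).comp_left (g := (InnerProductSpace.toDual ℝ (Euc d)).symm) (by simp)

lemma tsupport_mul_subset' (a b : Euc d → ℝ) :
    tsupport (fun x => a x * b x) ⊆ tsupport a ∩ tsupport b := by
  have h1 : Function.support (fun x => a x * b x) ⊆
      Function.support a ∩ Function.support b := fun x hx =>
    ⟨fun h => hx (by simp [h]), fun h => hx (by simp [h])⟩
  exact (closure_mono h1).trans (closure_inter_subset_inter_closure _ _)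

lemma finMeas {S : Set (Euc d)} (hb : Bornology.IsBounded S) :
    IsFiniteMeasure (volume.restrict S) :=
  ⟨by rw [Measure.restrict_apply_univ]; exact hb.measure_lt_top⟩

lemma memℒp_of_continuous {S : Set (Euc d)} (hb : Bornology.IsBounded S)
    (hSm : MeasurableSet S) {E : Type*} [NormedAddCommGroup E] {f : Euc d → E}
    (hf : Continuous f) (p : ℝ≥0∞) : MemLp f p (volume.restrict S) := by
  haveI := finMeas hb
  obtain ⟨C, hC⟩ := hb.isCompact_closure.exists_bound_of_continuousOn hf.continuousOn
  exact MemLp.of_bound hf.aestronglyMeasurable C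
    ((ae_restrict_iff' hSm).mpr (Filter.Eventually.of_forall fun x hx =>
      hC x (subset_closure hx)))

lemma integrable_smul_bdd_right {α : Type*} [MeasurableSpace α] {μ : Measure α}
    {E : Type*} [NormedAddCommGroup E] [NormedSpace ℝ E]
    {u : α → ℝ} {w : α → E} (hu : Integrable u μ) (hw : AEStronglyMeasurable w μ)
    {C : ℝ} (hC : ∀ x, ‖w x‖ ≤ C) : Integrable (fun x => u x • w x) μ := by
  refine Integrable.mono' (hu.norm.const_mul C) (hu.aestronglyMeasurable.smul hw) ?_
  refine Filter.Eventually.of_forall fun x => ?_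
  rw [norm_smul]
  calc ‖u x‖ * ‖w x‖ ≤ ‖u x‖ * C :=
        mul_le_mul_of_nonneg_left (hC x) (norm_nonneg _)
    _ = C * ‖u x‖ := mul_comm _ _

lemma integrable_smul_bdd_left {α : Type*} [MeasurableSpace α] {μ : Measure α}
    {E : Type*} [NormedAddCommGroup E] [NormedSpace ℝ E]
    {c : α → ℝ} {v : α → E} (hv : Integrable v μ) (hc : AEStronglyMeasurable c μ)
    {C : ℝ} (hC : ∀ x, ‖c x‖ ≤ C) : Integrable (fun x => c x • v x) μ := by
  refine Integrable.mono' (hv.norm.const_mul C) (hc.smul hv.aestronglyMeasurable) ?_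
  refine Filter.Eventually.of_forall fun x => ?_
  rw [norm_smul]
  exact mul_le_mul_of_nonneg_right (hC x) (norm_nonneg _)

lemma setIntegral_eq_of_zero_off {S T : Set (Euc d)} (hSm : MeasurableSet S)
    (hTm : MeasurableSet T) (hST : S ⊆ T)
    {E : Type*} [NormedAddCommGroup E] [NormedSpace ℝ E] {F : Euc d → E}
    (hF : ∀ x ∈ T, x ∉ S → F x = 0) :
    ∫ x in T, F x = ∫ x in S, F x := by
  have h1 : ∫ x in T, F x = ∫ x in T, S.indicator F x := by
    refine integral_congr_ae ((ae_restrict_iff' hTm).mpr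
      (Filter.Eventually.of_forall fun x hx => ?_))
    by_cases hxS : x ∈ S
    · simp [Set.indicator_of_mem hxS]
    · simp [Set.indicator_of_notMem hxS, hF x hx hxS]
  rw [h1, setIntegral_indicator hSm, Set.inter_eq_right.mpr hST]

end Helpers
lemma keyBound {q : ℝ} (hq : 1 ≤ q) {S T : Set (Euc d)}
    (hST : S ⊆ T) (η : Euc d → ℝ) (hηc : Continuous η)
    (M : ℝ) (hM : ∀ x, ‖η x‖ ≤ M) (hM' : ∀ x, ‖gradient η x‖ ≤ M)
    (v : Euc d → ℝ) (h : Euc d → Euc d)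
    (hv : MemLp v (ENNReal.ofReal q) (volume.restrict T))
    (hh : MemLp h (ENNReal.ofReal q) (volume.restrict T))
    (hηg : Continuous fun x => gradient η x) :
    MemLp (fun x => η x * v x) (ENNReal.ofReal q) (volume.restrict S) ∧
    MemLp (fun x => η x • h x + v x • gradient η x) (ENNReal.ofReal q) (volume.restrict S) ∧
    sobNorm q S (fun x => η x * v x) (fun x => η x • h x + v x • gradient η x)
      ≤ (2 * M) * sobNorm q T v h := by
  have hMnn : 0 ≤ M := le_trans (norm_nonneg _) (hM 0)
  set p := ENNReal.ofReal q with hp_def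
  have hp : 1 ≤ p := ENNReal.one_le_ofReal.mpr hq
  have hmono : volume.restrict S ≤ volume.restrict T := Measure.restrict_mono hST le_rfl
  have hvS : MemLp v p (volume.restrict S) := hv.mono_measure hmono
  have hhS : MemLp h p (volume.restrict S) := hh.mono_measure hmono
  -- memberships
  have hb1 : ∀ x, ‖η x * v x‖ ≤ M * ‖v x‖ := fun x => by
    rw [norm_mul]; exact mul_le_mul_of_nonneg_right (hM x) (norm_nonneg _)
  have hb2 : ∀ x, ‖η x • h x‖ ≤ M * ‖h x‖ := fun x => by
    rw [norm_smul]; exact mul_le_mul_of_nonneg_right (hM x) (norm_nonneg _)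
  have hb3 : ∀ x, ‖v x • gradient η x‖ ≤ M * ‖v x‖ := fun x => by
    rw [norm_smul]
    calc ‖v x‖ * ‖gradient η x‖ ≤ ‖v x‖ * M :=
          mul_le_mul_of_nonneg_left (hM' x) (norm_nonneg _)
      _ = M * ‖v x‖ := mul_comm _ _
  have m1 : MemLp (fun x => η x * v x) p (volume.restrict S) :=
    MemLp.of_le_mul hvS (hηc.aestronglyMeasurable.mul hvS.1)
      (Filter.Eventually.of_forall hb1)
  have m2a : MemLp (fun x => η x • h x) p (volume.restrict S) :=
    MemLp.of_le_mul hhS (hηc.aestronglyMeasurable.smul hhS.1)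
      (Filter.Eventually.of_forall hb2)
  have m2b : MemLp (fun x => v x • gradient η x) p (volume.restrict S) :=
    MemLp.of_le_mul hvS (hvS.1.smul hηg.aestronglyMeasurable)
      (Filter.Eventually.of_forall hb3)
  refine ⟨m1, m2a.add m2b, ?_⟩
  -- norm bound
  set M' : ℝ≥0 := M.toNNReal with hM'def
  have hM'co : (M' : ℝ) = M := Real.coe_toNNReal M hMnn
  set A := eLpNorm v p (volume.restrict T) with hA
  set B := eLpNorm h p (volume.restrict T) with hB
  have hAne : A ≠ ⊤ := hv.2.ne
  have hBne : B ≠ ⊤ := hh.2.ne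
  have e1 : eLpNorm (fun x => η x * v x) p (volume.restrict S) ≤ M' • A :=
    le_trans (eLpNorm_mono_measure _ hmono)
      (eLpNorm_le_nnreal_smul_eLpNorm_of_ae_le_mul
        (Filter.Eventually.of_forall fun x => by rw [← NNReal.coe_le_coe, NNReal.coe_mul, coe_nnnorm, coe_nnnorm, hM'co]; exact hb1 x) p)
  have e2 : eLpNorm (fun x => η x • h x + v x • gradient η x) p (volume.restrict S) ≤
      M' • B + M' • A := by
    refine le_trans (eLpNorm_mono_measure _ hmono) ?_
    refine le_trans (eLpNorm_add_le (hηc.aestronglyMeasurable.smul hh.1)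
      (hv.1.smul hηg.aestronglyMeasurable) hp) ?_
    exact add_le_add
      (eLpNorm_le_nnreal_smul_eLpNorm_of_ae_le_mul
        (Filter.Eventually.of_forall fun x => by rw [← NNReal.coe_le_coe, NNReal.coe_mul, coe_nnnorm, coe_nnnorm, hM'co]; exact hb2 x) p)
      (eLpNorm_le_nnreal_smul_eLpNorm_of_ae_le_mul
        (Filter.Eventually.of_forall fun x => by rw [← NNReal.coe_le_coe, NNReal.coe_mul, coe_nnnorm, coe_nnnorm, hM'co]; exact hb3 x) p)
  have hsmulA : (M' • A).toReal = M * A.toReal := by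
    rw [ENNReal.smul_def, smul_eq_mul, ENNReal.toReal_mul, ENNReal.coe_toReal, hM'co]
  have hsmulB : (M' • B).toReal = M * B.toReal := by
    rw [ENNReal.smul_def, smul_eq_mul, ENNReal.toReal_mul, ENNReal.coe_toReal, hM'co]
  have hMAne : M' • A ≠ ⊤ := by
    rw [ENNReal.smul_def, smul_eq_mul]; exact ENNReal.mul_ne_top ENNReal.coe_ne_top hAne
  have hMBne : M' • B ≠ ⊤ := by
    rw [ENNReal.smul_def, smul_eq_mul]; exact ENNReal.mul_ne_top ENNReal.coe_ne_top hBne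
  have t1 : (eLpNorm (fun x => η x * v x) p (volume.restrict S)).toReal ≤ M * A.toReal := by
    rw [← hsmulA]; exact ENNReal.toReal_mono hMAne e1
  have t2 : (eLpNorm (fun x => η x • h x + v x • gradient η x) p
      (volume.restrict S)).toReal ≤ M * B.toReal + M * A.toReal := by
    rw [← hsmulB, ← hsmulA, ← ENNReal.toReal_add hMBne hMAne]
    exact ENNReal.toReal_mono (by finiteness) e2
  have hAnn : 0 ≤ A.toReal := ENNReal.toReal_nonneg
  have hBnn : 0 ≤ B.toReal := ENNReal.toReal_nonneg
  unfold sobNorm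
  rw [← hA, ← hB]
  nlinarith [t1, t2]

lemma coreIdentity {S : Set (Euc d)}
    (η φ : Euc d → ℝ) (hη : ContDiff ℝ (⊤ : ℕ∞) η) (hηc : HasCompactSupport η)
    (hφ : ContDiff ℝ (⊤ : ℕ∞) φ) (hφc : HasCompactSupport φ)
    {u : Euc d → ℝ} {g : Euc d → Euc d}
    (hu : Integrable u (volume.restrict S)) (hg : Integrable g (volume.restrict S))
    (key : ∫ x in S, u x • gradient (fun y => η y * φ y) x = -∫ x in S, (η x * φ x) • g x) :
    ∫ x in S, (η x * u x) • gradient φ x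
      = -∫ x in S, φ x • (η x • g x + u x • gradient η x) := by
  obtain ⟨Cη, hCη⟩ := hηc.exists_bound_of_continuous hη.continuous
  obtain ⟨Cφ, hCφ⟩ := hφc.exists_bound_of_continuous hφ.continuous
  obtain ⟨Dη, hDη⟩ := (hcs_gradient hηc).exists_bound_of_continuous (continuous_gradient hη)
  obtain ⟨Dφ, hDφ⟩ := (hcs_gradient hφc).exists_bound_of_continuous (continuous_gradient hφ)
  have hCηnn : 0 ≤ Cη := le_trans (norm_nonneg _) (hCη 0)
  have hCφnn : 0 ≤ Cφ := le_trans (norm_nonneg _) (hCφ 0)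
  have I1 : Integrable (fun x => u x • (η x • gradient φ x)) (volume.restrict S) := by
    refine integrable_smul_bdd_right hu
      ((hη.continuous.smul (continuous_gradient hφ)).aestronglyMeasurable) (C := Cη * Dφ)
      fun x => ?_
    rw [norm_smul]
    exact mul_le_mul (hCη x) (hDφ x) (norm_nonneg _) hCηnn
  have I2 : Integrable (fun x => u x • (φ x • gradient η x)) (volume.restrict S) := by
    refine integrable_smul_bdd_right hu
      ((hφ.continuous.smul (continuous_gradient hη)).aestronglyMeasurable) (C := Cφ * Dη)
      fun x => ?_
    rw [norm_smul]
    exact mul_le_mul (hCφ x) (hDη x) (norm_nonneg _) hCφnn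
  have I3 : Integrable (fun x => (η x * φ x) • g x) (volume.restrict S) := by
    refine integrable_smul_bdd_left hg
      ((hη.continuous.mul hφ.continuous).aestronglyMeasurable) (C := Cη * Cφ) fun x => ?_
    rw [norm_mul]
    exact mul_le_mul (hCη x) (hCφ x) (norm_nonneg _) hCηnn
  have hgr : ∀ x, gradient (fun y => η y * φ y) x
      = η x • gradient φ x + φ x • gradient η x :=
    gradient_mul' _ _ (hη.differentiable (by simp)) (hφ.differentiable (by simp))
  have split : ∫ x in S, u x • gradient (fun y => η y * φ y) x
      = (∫ x in S, u x • (η x • gradient φ x)) + ∫ x in S, u x • (φ x • gradient η x) := by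
    rw [← integral_add I1 I2]
    exact integral_congr_ae (Filter.Eventually.of_forall fun x => by beta_reduce; rw [hgr x, smul_add])
  have l1 : ∫ x in S, (η x * u x) • gradient φ x
      = ∫ x in S, u x • (η x • gradient φ x) :=
    integral_congr_ae (Filter.Eventually.of_forall fun x => by
      beta_reduce; rw [smul_smul, mul_comm (u x) (η x)])
  have r1 : ∫ x in S, φ x • (η x • g x + u x • gradient η x)
      = (∫ x in S, (η x * φ x) • g x) + ∫ x in S, u x • (φ x • gradient η x) := by
    rw [← integral_add I3 I2]
    exact integral_congr_ae (Filter.Eventually.of_forall fun x => by module)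
  rw [l1, r1, neg_add]
  have h2 := split.symm.trans key
  have h3 : ∫ x in S, u x • (η x • gradient φ x)
      = (-∫ x in S, (η x * φ x) • g x) - ∫ x in S, u x • (φ x • gradient η x) := by
    rw [← h2]; abel
  rw [h3]; abel

lemma wgrad_restrict {Ω Υ : Set (Euc d)} (hΩo : IsOpen Ω) (hΥ : IsOpen Υ)
    (hΩb : Bornology.IsBounded Ω)
    (η : Euc d → ℝ) (hη : ContDiff ℝ (⊤ : ℕ∞) η) (hηc : HasCompactSupport η)
    {q : ℝ} (hq : 1 ≤ q) {u : Euc d → ℝ} {g : Euc d → Euc d}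
    (hu : MemLp u (ENNReal.ofReal q) (volume.restrict Ω))
    (hg : MemLp g (ENNReal.ofReal q) (volume.restrict Ω))
    (hw : HasWeakGradOn Ω u g) :
    HasWeakGradOn (Ω ∩ Υ) (fun x => η x * u x)
      (fun x => η x • g x + u x • gradient η x) := by
  intro φ hφ hφc hφs
  haveI := finMeas hΩb
  have hp1 : (1 : ℝ≥0∞) ≤ ENNReal.ofReal q := ENNReal.one_le_ofReal.mpr hq
  have hui : Integrable u (volume.restrict Ω) := hu.integrable hp1
  have hgi : Integrable g (volume.restrict Ω) := hg.integrable hp1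
  have hχ : ContDiff ℝ (⊤ : ℕ∞) (fun x => η x * φ x) := hη.mul hφ
  have hts : tsupport (fun x => η x * φ x) ⊆ tsupport φ :=
    (tsupport_mul_subset' η φ).trans inter_subset_right
  have hχc : HasCompactSupport (fun x => η x * φ x) :=
    hφc.of_isClosed_subset isClosed_closure hts
  have hχs : tsupport (fun x => η x * φ x) ⊆ Ω :=
    hts.trans (hφs.trans inter_subset_left)
  have key := hw _ hχ hχc hχs
  have core := coreIdentity η φ hη hηc hφ hφc hui hgi key
  have hSm : MeasurableSet (Ω ∩ Υ) := (hΩo.inter hΥ).measurableSet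
  have hΩm : MeasurableSet Ω := hΩo.measurableSet
  have hzero1 : ∀ x ∈ Ω, x ∉ Ω ∩ Υ → (η x * u x) • gradient φ x = 0 := by
    intro x _ hx
    rw [gradient_eq_zero_of_nmem_tsupport (fun hxs => hx (hφs hxs)), smul_zero]
  have hzero2 : ∀ x ∈ Ω, x ∉ Ω ∩ Υ →
      φ x • (η x • g x + u x • gradient η x) = 0 := by
    intro x _ hx
    rw [image_eq_zero_of_notMem_tsupport (fun hxs => hx (hφs hxs)), zero_smul]
  rw [← setIntegral_eq_of_zero_off hSm hΩm inter_subset_left hzero1,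
      ← setIntegral_eq_of_zero_off hSm hΩm inter_subset_left hzero2]
  exact core

lemma wgrad_extend {Ω Υ : Set (Euc d)} (hΩo : IsOpen Ω) (hΥ : IsOpen Υ)
    (hΩb : Bornology.IsBounded Ω)
    (η : Euc d → ℝ) (hη : ContDiff ℝ (⊤ : ℕ∞) η) (hηc : HasCompactSupport η)
    (hηΥ : tsupport η ⊆ Υ)
    {q : ℝ} (hq : 1 ≤ q) {u : Euc d → ℝ} {g : Euc d → Euc d}
    (hu : MemLp u (ENNReal.ofReal q) (volume.restrict (Ω ∩ Υ)))
    (hg : MemLp g (ENNReal.ofReal q) (volume.restrict (Ω ∩ Υ)))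
    (hw : HasWeakGradOn (Ω ∩ Υ) u g) :
    HasWeakGradOn Ω ((Ω ∩ Υ).indicator (fun x => η x * u x))
      ((Ω ∩ Υ).indicator (fun x => η x • g x + u x • gradient η x)) := by
  intro φ hφ hφc hφs
  haveI := finMeas (hΩb.subset (inter_subset_left (t := Υ)))
  have hp1 : (1 : ℝ≥0∞) ≤ ENNReal.ofReal q := ENNReal.one_le_ofReal.mpr hq
  have hui : Integrable u (volume.restrict (Ω ∩ Υ)) := hu.integrable hp1
  have hgi : Integrable g (volume.restrict (Ω ∩ Υ)) := hg.integrable hp1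
  have hχ : ContDiff ℝ (⊤ : ℕ∞) (fun x => η x * φ x) := hη.mul hφ
  have hts : tsupport (fun x => η x * φ x) ⊆ tsupport η ∩ tsupport φ :=
    tsupport_mul_subset' η φ
  have hχc : HasCompactSupport (fun x => η x * φ x) :=
    hφc.of_isClosed_subset isClosed_closure (hts.trans inter_subset_right)
  have hχs : tsupport (fun x => η x * φ x) ⊆ Ω ∩ Υ := fun x hx =>
    ⟨hφs (hts hx).2, hηΥ (hts hx).1⟩
  have key := hw _ hχ hχc hχs
  have core := coreIdentity η φ hη hηc hφ hφc hui hgi key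
  have hSm : MeasurableSet (Ω ∩ Υ) := (hΩo.inter hΥ).measurableSet
  have hinter : Ω ∩ (Ω ∩ Υ) = Ω ∩ Υ := Set.inter_eq_right.mpr inter_subset_left
  have e1 : ∫ x in Ω, ((Ω ∩ Υ).indicator (fun x => η x * u x)) x • gradient φ x
      = ∫ x in Ω ∩ Υ, (η x * u x) • gradient φ x := by
    have hpt : ∀ x, ((Ω ∩ Υ).indicator (fun x => η x * u x)) x • gradient φ x
        = (Ω ∩ Υ).indicator (fun x => (η x * u x) • gradient φ x) x := fun x => by
      by_cases hx : x ∈ Ω ∩ Υ <;>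
        simp [Set.indicator_of_mem, Set.indicator_of_notMem, hx]
    simp only [hpt]
    rw [setIntegral_indicator hSm, hinter]
  have e2 : ∫ x in Ω, φ x •
        ((Ω ∩ Υ).indicator (fun x => η x • g x + u x • gradient η x)) x
      = ∫ x in Ω ∩ Υ, φ x • (η x • g x + u x • gradient η x) := by
    have hpt : ∀ x, φ x •
          ((Ω ∩ Υ).indicator (fun x => η x • g x + u x • gradient η x)) x
        = (Ω ∩ Υ).indicator (fun x => φ x • (η x • g x + u x • gradient η x)) x := fun x => by
      by_cases hx : x ∈ Ω ∩ Υ <;>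
        simp [Set.indicator_of_mem, Set.indicator_of_notMem, hx]
    simp only [hpt]
    rw [setIntegral_indicator hSm, hinter]
  rw [e1, e2]
  exact core

lemma tsupp_cond_restrict {Ω Υ Γ : Set (Euc d)} (hΩo : IsOpen Ω) (hΥ : IsOpen Υ)
    {η ψ : Euc d → ℝ} (hηΥ : tsupport η ⊆ Υ)
    (hψ : tsupport ψ ∩ (frontier Ω \ Γ) = ∅) :
    tsupport (fun x => η x * ψ x) ∩ (frontier (Ω ∩ Υ) \ (Γ ∩ Υ)) = ∅ := by
  rw [Set.eq_empty_iff_forall_notMem]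
  rintro x ⟨hxs, hxf, hxΓ⟩
  have hxη : x ∈ tsupport η := (tsupport_mul_subset' η ψ hxs).1
  have hxψ : x ∈ tsupport ψ := (tsupport_mul_subset' η ψ hxs).2
  have hxΥ : x ∈ Υ := hηΥ hxη
  rw [(hΩo.inter hΥ).frontier_eq] at hxf
  have hxnΩ : x ∉ Ω := fun hxΩ => hxf.2 ⟨hxΩ, hxΥ⟩
  have hxfΩ : x ∈ frontier Ω := by
    rw [hΩo.frontier_eq]
    exact ⟨closure_mono inter_subset_left hxf.1, hxnΩ⟩
  have : x ∈ tsupport ψ ∩ (frontier Ω \ Γ) :=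
    ⟨hxψ, hxfΩ, fun hxg => hxΓ ⟨hxg, hxΥ⟩⟩
  rw [hψ] at this
  exact this

lemma tsupp_cond_extend {Ω Υ Γ : Set (Euc d)} (hΩo : IsOpen Ω) (hΥ : IsOpen Υ)
    {η ψ : Euc d → ℝ} (hηΥ : tsupport η ⊆ Υ)
    (hψ : tsupport ψ ∩ (frontier (Ω ∩ Υ) \ (Γ ∩ Υ)) = ∅) :
    tsupport (fun x => η x * ψ x) ∩ (frontier Ω \ Γ) = ∅ := by
  rw [Set.eq_empty_iff_forall_notMem]
  rintro x ⟨hxs, hxf, hxΓ⟩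
  have hxη : x ∈ tsupport η := (tsupport_mul_subset' η ψ hxs).1
  have hxψ : x ∈ tsupport ψ := (tsupport_mul_subset' η ψ hxs).2
  have hxΥ : x ∈ Υ := hηΥ hxη
  rw [hΩo.frontier_eq] at hxf
  have hxcl : x ∈ closure (Ω ∩ Υ) := by
    rw [Set.inter_comm]
    exact hΥ.inter_closure ⟨hxΥ, hxf.1⟩
  have hxfS : x ∈ frontier (Ω ∩ Υ) := by
    rw [(hΩo.inter hΥ).frontier_eq]
    exact ⟨hxcl, fun h => hxf.2 h.1⟩
  have : x ∈ tsupport ψ ∩ (frontier (Ω ∩ Υ) \ (Γ ∩ Υ)) :=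
    ⟨hxψ, hxfS, fun hxg => hxΓ hxg.1⟩
  rw [hψ] at this
  exact this


/-- Let `Ω` be a bounded Lipschitz domain, `Γ ⊆ ∂Ω` open, `Υ ⊆ ℝ^d` open
with `Ω_• := Ω ∩ Υ` a Lipschitz domain, `Γ_• := Γ ∩ Υ`, and `η ∈ C_0^∞(ℝ^d)` with
`supp η ⊆ Υ`.  Then for every `q ∈ (1,∞)`:
(i) `v ↦ (ηv)|_{Ω_•}` is continuous from `H^{1,q}_Γ(Ω)` to `H^{1,q}_{Γ_•}(Ω_•)`;
(ii) `v ↦ (extension of ηv to Ω by zero)` is continuous from `H^{1,q}_{Γ_•}(Ω_•)` to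
`H^{1,q}_Γ(Ω)`. -/
theorem localization_restriction_and_extension
    [NeZero d] (Ω Γ Υ : Set (Euc d))
    (hΩ : IsLipschitzDomain Ω) (hΥ : IsOpen Υ)
    (hΩdot : IsLipschitzDomain (Ω ∩ Υ))
    (hΓ : Γ ⊆ frontier Ω) (hΓopen : ∃ G : Set (Euc d), IsOpen G ∧ Γ = G ∩ frontier Ω)
    (η : Euc d → ℝ) (hη : ContDiff ℝ (⊤ : ℕ∞) η) (hηsupp : HasCompactSupport η)
    (hηΥ : tsupport η ⊆ Υ)
    (q : ℝ) (hq : 1 < q) :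
    -- (i) multiplication by η and restriction, `H^{1,q}_Γ(Ω) → H^{1,q}_{Γ∩Υ}(Ω∩Υ)`:
    (∃ C : ℝ, ∀ u g, MemSobGamma q Ω Γ u g →
      MemSobGamma q (Ω ∩ Υ) (Γ ∩ Υ) (fun x => η x * u x)
        (fun x => η x • g x + u x • gradient η x) ∧
      sobNorm q (Ω ∩ Υ) (fun x => η x * u x)
          (fun x => η x • g x + u x • gradient η x) ≤ C * sobNorm q Ω u g) ∧
    -- (ii) multiplication by η and extension by zero, `H^{1,q}_{Γ∩Υ}(Ω∩Υ) → H^{1,q}_Γ(Ω)`: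
    (∃ C : ℝ, ∀ u g, MemSobGamma q (Ω ∩ Υ) (Γ ∩ Υ) u g →
      MemSobGamma q Ω Γ ((Ω ∩ Υ).indicator (fun x => η x * u x))
        ((Ω ∩ Υ).indicator (fun x => η x • g x + u x • gradient η x)) ∧
      sobNorm q Ω ((Ω ∩ Υ).indicator (fun x => η x * u x))
          ((Ω ∩ Υ).indicator (fun x => η x • g x + u x • gradient η x)) ≤
        C * sobNorm q (Ω ∩ Υ) u g) := by
  obtain ⟨hΩo, hΩb, -⟩ := hΩ
  have hq1 : 1 ≤ q := hq.le
  have hΩm : MeasurableSet Ω := hΩo.measurableSet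
  have hSo : IsOpen (Ω ∩ Υ) := hΩo.inter hΥ
  have hSm : MeasurableSet (Ω ∩ Υ) := hSo.measurableSet
  have hSb : Bornology.IsBounded (Ω ∩ Υ) := hΩb.subset inter_subset_left
  have hster : (Ω ∩ Υ) ∩ Ω = Ω ∩ Υ := Set.inter_eq_left.mpr inter_subset_left
  have hηcont := hη.continuous
  have hηg : Continuous fun x => gradient η x := continuous_gradient hη
  obtain ⟨M0, hM0⟩ := hηsupp.exists_bound_of_continuous hηcont
  obtain ⟨M1, hM1⟩ := (hcs_gradient hηsupp).exists_bound_of_continuous hηg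
  set M : ℝ := max M0 M1 with hMdef
  have hMb : ∀ x, ‖η x‖ ≤ M := fun x => (hM0 x).trans (le_max_left _ _)
  have hMb' : ∀ x, ‖gradient η x‖ ≤ M := fun x => (hM1 x).trans (le_max_right _ _)
  have hMnn : 0 ≤ M := le_trans (norm_nonneg _) (hMb 0)
  have h21 : (0:ℝ) < 2 * M + 1 := by linarith
  constructor
  · -- part (i)
    refine ⟨2 * M, fun u g hug => ?_⟩
    obtain ⟨⟨hu, hg, hw⟩, happrox⟩ := hug
    obtain ⟨mem1, mem2, normb⟩ :=
      keyBound hq1 inter_subset_left η hηcont M hMb hMb' u g hu hg hηg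
    refine ⟨⟨⟨mem1, mem2, wgrad_restrict hΩo hΥ hΩb η hη hηsupp hq1 hu hg hw⟩, ?_⟩, normb⟩
    intro ε hε
    obtain ⟨ψ, hψs, hψd, hψn⟩ := happrox (ε / (2 * M + 1)) (div_pos hε h21)
    refine ⟨fun x => η x * ψ x, hη.mul hψs, tsupp_cond_restrict hΩo hΥ hηΥ hψd, ?_⟩
    have hψmem : MemLp ψ (ENNReal.ofReal q) (volume.restrict Ω) :=
      memℒp_of_continuous hΩb hΩm hψs.continuous _
    have hψgmem : MemLp (fun x => gradient ψ x) (ENNReal.ofReal q) (volume.restrict Ω) :=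
      memℒp_of_continuous hΩb hΩm (continuous_gradient hψs) _
    have kb := (keyBound hq1 (inter_subset_left (s := Ω) (t := Υ)) η hηcont M hMb hMb' (u - ψ)
      (g - fun x => gradient ψ x) (hu.sub hψmem) (hg.sub hψgmem) hηg).2.2
    have efun : (fun x => η x * u x) - (fun x => η x * ψ x)
        = fun x => η x * (u - ψ) x := by
      funext x; simp only [Pi.sub_apply]; ring
    have egrad : (fun x => η x • g x + u x • gradient η x)
          - (fun x => gradient (fun x => η x * ψ x) x)
        = fun x => η x • (g - fun y => gradient ψ y) x + (u - ψ) x • gradient η x := by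
      funext x
      simp only [Pi.sub_apply]
      rw [gradient_mul' η ψ (hη.differentiable (by simp)) (hψs.differentiable (by simp))]
      module
    rw [efun, egrad]
    calc sobNorm q (Ω ∩ Υ) (fun x => η x * (u - ψ) x)
          (fun x => η x • (g - fun y => gradient ψ y) x + (u - ψ) x • gradient η x)
        ≤ 2 * M * sobNorm q Ω (u - ψ) (g - fun x => gradient ψ x) := kb
      _ ≤ 2 * M * (ε / (2 * M + 1)) :=
          mul_le_mul_of_nonneg_left hψn.le (by linarith)
      _ < ε := by
          rw [mul_div_assoc', div_lt_iff₀ h21]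
          nlinarith
  · -- part (ii)
    refine ⟨2 * M, fun u g hug => ?_⟩
    obtain ⟨⟨hu, hg, hw⟩, happrox⟩ := hug
    obtain ⟨mem1, mem2, normb⟩ :=
      keyBound hq1 (subset_refl (Ω ∩ Υ)) η hηcont M hMb hMb' u g hu hg hηg
    have mi1 : MemLp ((Ω ∩ Υ).indicator fun x => η x * u x) (ENNReal.ofReal q)
        (volume.restrict Ω) := by
      rw [memLp_indicator_iff_restrict hSm, Measure.restrict_restrict hSm, hster]
      exact mem1
    have mi2 : MemLp ((Ω ∩ Υ).indicator fun x => η x • g x + u x • gradient η x)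
        (ENNReal.ofReal q) (volume.restrict Ω) := by
      rw [memLp_indicator_iff_restrict hSm, Measure.restrict_restrict hSm, hster]
      exact mem2
    have es : sobNorm q Ω ((Ω ∩ Υ).indicator fun x => η x * u x)
        ((Ω ∩ Υ).indicator fun x => η x • g x + u x • gradient η x)
        = sobNorm q (Ω ∩ Υ) (fun x => η x * u x)
          (fun x => η x • g x + u x • gradient η x) := by
      unfold sobNorm
      rw [eLpNorm_indicator_eq_eLpNorm_restrict hSm,
        eLpNorm_indicator_eq_eLpNorm_restrict hSm,
        Measure.restrict_restrict hSm, hster]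
    refine ⟨⟨⟨mi1, mi2, wgrad_extend hΩo hΥ hΩb η hη hηsupp hηΥ hq1 hu hg hw⟩, ?_⟩,
      by rw [es]; exact normb⟩
    intro ε hε
    obtain ⟨ψ, hψs, hψd, hψn⟩ := happrox (ε / (2 * M + 1)) (div_pos hε h21)
    refine ⟨fun x => η x * ψ x, hη.mul hψs, tsupp_cond_extend hΩo hΥ hηΥ hψd, ?_⟩
    have hψmem : MemLp ψ (ENNReal.ofReal q) (volume.restrict (Ω ∩ Υ)) :=
      memℒp_of_continuous hSb hSm hψs.continuous _
    have hψgmem : MemLp (fun x => gradient ψ x) (ENNReal.ofReal q)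
        (volume.restrict (Ω ∩ Υ)) :=
      memℒp_of_continuous hSb hSm (continuous_gradient hψs) _
    have kb := (keyBound hq1 (subset_refl (Ω ∩ Υ)) η hηcont M hMb hMb' (u - ψ)
      (g - fun x => gradient ψ x) (hu.sub hψmem) (hg.sub hψgmem) hηg).2.2
    have hηzero : ∀ x, x ∉ Υ → η x = 0 := fun x hx =>
      image_eq_zero_of_notMem_tsupport (fun h => hx (hηΥ h))
    have hcongr1 : ((Ω ∩ Υ).indicator (fun x => η x * u x) - fun x => η x * ψ x)
        =ᵐ[volume.restrict Ω]
        (Ω ∩ Υ).indicator (fun x => η x * (u - ψ) x) := by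
      refine (ae_restrict_iff' hΩm).mpr (Filter.Eventually.of_forall fun x hxΩ => ?_)
      by_cases hx : x ∈ Ω ∩ Υ
      · simp only [Pi.sub_apply, Set.indicator_of_mem hx]
        ring
      · have hxΥ : x ∉ Υ := fun h => hx ⟨hxΩ, h⟩
        simp only [Pi.sub_apply, Set.indicator_of_notMem hx, hηzero x hxΥ, zero_mul,
          sub_zero]
    have hcongr2 : ((Ω ∩ Υ).indicator (fun x => η x • g x + u x • gradient η x)
          - fun x => gradient (fun x => η x * ψ x) x)
        =ᵐ[volume.restrict Ω]
        (Ω ∩ Υ).indicator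
          (fun x => η x • (g - fun y => gradient ψ y) x + (u - ψ) x • gradient η x) := by
      refine (ae_restrict_iff' hΩm).mpr (Filter.Eventually.of_forall fun x hxΩ => ?_)
      by_cases hx : x ∈ Ω ∩ Υ
      · simp only [Pi.sub_apply, Set.indicator_of_mem hx]
        rw [gradient_mul' η ψ (hη.differentiable (by simp)) (hψs.differentiable (by simp))]
        module
      · have hxΥ : x ∉ Υ := fun h => hx ⟨hxΩ, h⟩
        have hgz : gradient (fun x => η x * ψ x) x = 0 :=
          gradient_eq_zero_of_nmem_tsupport (fun h =>
            hxΥ (hηΥ ((tsupport_mul_subset' η ψ) h).1))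
        simp only [Pi.sub_apply, Set.indicator_of_notMem hx, hgz, sub_zero]
    have n1 : eLpNorm ((Ω ∩ Υ).indicator (fun x => η x * u x) - fun x => η x * ψ x)
        (ENNReal.ofReal q) (volume.restrict Ω)
        = eLpNorm (fun x => η x * (u - ψ) x) (ENNReal.ofReal q)
          (volume.restrict (Ω ∩ Υ)) := by
      rw [eLpNorm_congr_ae hcongr1, eLpNorm_indicator_eq_eLpNorm_restrict hSm,
        Measure.restrict_restrict hSm, hster]
    have n2 : eLpNorm ((Ω ∩ Υ).indicator (fun x => η x • g x + u x • gradient η x)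
          - fun x => gradient (fun x => η x * ψ x) x)
        (ENNReal.ofReal q) (volume.restrict Ω)
        = eLpNorm (fun x => η x • (g - fun y => gradient ψ y) x + (u - ψ) x • gradient η x)
          (ENNReal.ofReal q) (volume.restrict (Ω ∩ Υ)) := by
      rw [eLpNorm_congr_ae hcongr2, eLpNorm_indicator_eq_eLpNorm_restrict hSm,
        Measure.restrict_restrict hSm, hster]
    have es2 : sobNorm q Ω
          ((Ω ∩ Υ).indicator (fun x => η x * u x) - fun x => η x * ψ x)
          ((Ω ∩ Υ).indicator (fun x => η x • g x + u x • gradient η x)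
            - fun x => gradient (fun x => η x * ψ x) x)
        = sobNorm q (Ω ∩ Υ) (fun x => η x * (u - ψ) x)
          (fun x => η x • (g - fun y => gradient ψ y) x + (u - ψ) x • gradient η x) := by
      unfold sobNorm
      rw [n1, n2]
    rw [es2]
    calc sobNorm q (Ω ∩ Υ) (fun x => η x * (u - ψ) x)
          (fun x => η x • (g - fun y => gradient ψ y) x + (u - ψ) x • gradient η x)
        ≤ 2 * M * sobNorm q (Ω ∩ Υ) (u - ψ) (g - fun x => gradient ψ x) := kb
      _ ≤ 2 * M * (ε / (2 * M + 1)) :=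
          mul_le_mul_of_nonneg_left hψn.le (by linarith)
      _ < ε := by
          rw [mul_div_assoc', div_lt_iff₀ h21]
          nlinarith
end
end
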